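/- The operator logarithmic derivative with respect to r, defined by L₁ = ∫₀^π ∫₀^{2π} (∂/∂r)[log Q(r,θ,φ;θ₁,φ₁)] · Δ(θ₁,φ₁,1) · (sinθ₁/(2π)) dφ₁ dθ₁, equals (1/(2r³))·(2r + log((1-r)/(1+r))) · [[r-3cosθ, -3e^{-iφ}sinθ],[-3e^{iφ}sinθ, r+3cosθ]], for 0 < r < 1. -/

import Mathlib

open Real Matrix MeasureTheory

noncomputable def husimiQ (r θ φ θ₁ φ₁ : ℝ) : ℝ :=
  (1 / 2) * (1 + r * Real.cos θ₁ * Real.cos θ + r * Real.cos (φ₁ - φ) * Real.sin θ₁ * Real.sin θ)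

/-- The Stratonovich–Weyl kernel with ordering parameter `s = 1`. -/
noncomputable def swKernelOne (θ φ : ℝ) : Matrix (Fin 2) (Fin 2) ℂ :=
  (1 / 2 : ℂ) •
    !![(1 + 3 * Real.cos θ : ℂ), 3 * Complex.exp (-Complex.I * φ) * Real.sin θ;
       3 * Complex.exp (Complex.I * φ) * Real.sin θ, (1 - 3 * Real.cos θ : ℂ)]

/-- The claimed closed form of the operator logarithmic derivative `L₁`. -/
noncomputable def L1 (r θ φ : ℝ) : Matrix (Fin 2) (Fin 2) ℂ :=
  ((1 / (2 * r ^ 3) * (2 * r + Real.log ((1 - r) / (1 + r))) : ℝ) : ℂ) •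
    !![(r - 3 * Real.cos θ : ℂ), -3 * Complex.exp (-Complex.I * φ) * Real.sin θ;
       -3 * Complex.exp (Complex.I * φ) * Real.sin θ, (r + 3 * Real.cos θ : ℂ)]

/-!
Write `2 Q = P + A cos (φ₁ - φ)` with `P = 1 + r cos θ cos θ₁` and `A = r sin θ sin θ₁`
(`husimiMean` and `husimiAmp`), so that `∂ᵣ log Q = (1 - (P + A cos (φ₁ - φ))⁻¹) / r`.
After the shift `φ₁ ↦ φ₁ + φ`, which produces the phase `e^{∓iφ}` off the diagonal, the
`φ₁`-integrals reduce to `∫₀^{2π} dx / (p + q cos x) = 2π / √(p² - q²)` and its first cosine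
moment; the sine moment vanishes by the symmetry `x ↦ 2π - x`.
With `S = √(P² - A²)` (`husimiRoot`) what is left are the `θ₁`-integrals of `sin θ₁ / S` and
`sin θ₁ cos θ₁ / S`, which are elementary: `S² = (r cos θ₁ + cos θ)² + (1 - r²) sin² θ`, so
`log (S + r cos θ₁ + cos θ)` has derivative `-r sin θ₁ / S`, and
`S' = -r sin θ₁ (r cos θ₁ + cos θ) / S`.
The entry below the diagonal is the complex conjugate of the one above it.
-/

open intervalIntegral ComplexConjugate

section PeriodIntegrals

variable {p q : ℝ}

theorem Function.Periodic.intervalIntegral_comp_sub {E : Type*} [NormedAddCommGroup E]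
    [NormedSpace ℝ E] {f : ℝ → E} {T : ℝ} (hf : f.Periodic T) (a : ℝ) :
    ∫ x in (0:ℝ)..T, f (x - a) = ∫ x in (0:ℝ)..T, f x := by
  simpa [integral_comp_sub_right, sub_eq_neg_add] using hf.intervalIntegral_add_eq (-a) 0

theorem integral_comp_cos_mul_sin (g : ℝ → ℝ) :
    ∫ x in (0:ℝ)..(2 * π), g (cos x) * sin x = 0 := by
  have h := integral_comp_sub_left (fun x => g (cos x) * sin x) (a := 0) (b := 2 * π) (2 * π)
  simp only [cos_two_pi_sub, sin_two_pi_sub, mul_neg, intervalIntegral.integral_neg, sub_self,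
    sub_zero] at h
  linarith

lemma add_mul_cos_pos (hq : |q| < p) (x : ℝ) : 0 < p + q * cos x := by
  have : |q * cos x| ≤ |q| := by
    rw [abs_mul]; exact mul_le_of_le_one_right (abs_nonneg q) (abs_cos_le_one x)
  linarith [neg_abs_le (q * cos x)]

lemma continuous_inv_add_mul_cos (hq : |q| < p) : Continuous fun x => (p + q * cos x)⁻¹ :=
  (continuous_const.add (continuous_const.mul continuous_cos)).inv₀
    (fun x => (add_mul_cos_pos hq x).ne')

theorem integral_inv_add_mul_cos (hq : |q| < p) :
    ∫ x in (0:ℝ)..(2 * π), (p + q * cos x)⁻¹ = 2 * π / √(p ^ 2 - q ^ 2) := by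
  have hp : 0 < p := (abs_nonneg q).trans_lt hq
  have hqp : q ^ 2 < p ^ 2 := sq_lt_sq.mpr (by rwa [abs_of_pos hp])
  set s := √(p ^ 2 - q ^ 2)
  have hs : 0 < s := Real.sqrt_pos.mpr (by linarith)
  have hs2 : s ^ 2 = p ^ 2 - q ^ 2 := Real.sq_sqrt (by linarith)
  have hD (x : ℝ) : 0 < p + s + q * cos x := by linarith [add_mul_cos_pos hq x]
  -- a form of the textbook antiderivative `(2 / s) arctan (√((p - q) / (p + q)) tan (x / 2))`
  -- that is smooth on all of `ℝ`
  have hF (x : ℝ) : HasDerivAt (fun x => (x - 2 * arctan (q * sin x / (p + s + q * cos x))) / s)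
      (p + q * cos x)⁻¹ x := by
    have h := ((hasDerivAt_sin x).const_mul q).div
      (((hasDerivAt_cos x).const_mul q).const_add (p + s)) (hD x).ne'
    refine (((hasDerivAt_id x).sub (h.arctan.const_mul 2)).div_const s).congr_deriv ?_
    have := hD x
    have := add_mul_cos_pos hq x
    simp only [Pi.div_apply]
    field_simp
    linear_combination
      (-(p + s + q * cos x)) * hs2 - (p + s + q * cos x) * q ^ 2 * sin_sq_add_cos_sq x
  have hcont := continuous_inv_add_mul_cos hq
  rw [integral_eq_sub_of_hasDerivAt (fun x _ => hF x) (hcont.intervalIntegrable _ _)]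
  simp

theorem integral_one_sub_inv_add_mul_cos (hq : |q| < p) :
    ∫ x in (0:ℝ)..(2 * π), (1 - (p + q * cos x)⁻¹) = 2 * π * (1 - 1 / √(p ^ 2 - q ^ 2)) := by
  have hcont := continuous_inv_add_mul_cos hq
  rw [integral_sub intervalIntegrable_const (hcont.intervalIntegrable _ _),
    integral_inv_add_mul_cos hq]
  simp only [intervalIntegral.integral_const, sub_zero, smul_eq_mul]
  ring

theorem mul_integral_one_sub_inv_add_mul_cos_mul_cos (hq : |q| < p) :
    q * ∫ x in (0:ℝ)..(2 * π), (1 - (p + q * cos x)⁻¹) * cos x =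
      2 * π * (p / √(p ^ 2 - q ^ 2) - 1) := by
  have hcont := continuous_inv_add_mul_cos hq
  have h (x : ℝ) :
      q * ((1 - (p + q * cos x)⁻¹) * cos x) = q * cos x - 1 + p * (p + q * cos x)⁻¹ := by
    have := (add_mul_cos_pos hq x).ne'
    field_simp
    ring
  rw [← intervalIntegral.integral_const_mul, integral_congr (fun x _ => h x),
    integral_add (Continuous.intervalIntegrable (by fun_prop) _ _)
      ((hcont.intervalIntegrable _ _).const_mul p),
    integral_sub (Continuous.intervalIntegrable (by fun_prop) _ _) intervalIntegrable_const,
    intervalIntegral.integral_const_mul, intervalIntegral.integral_const_mul, integral_cos,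
    integral_inv_add_mul_cos hq]
  simp only [sin_two_pi, sin_zero, sub_self, intervalIntegral.integral_const, sub_zero, smul_eq_mul]
  ring

theorem integral_comp_cos_sub {E : Type*} [NormedAddCommGroup E] [NormedSpace ℝ E] (g : ℝ → E)
    (φ : ℝ) : ∫ x in (0:ℝ)..(2 * π), g (cos (x - φ)) = ∫ x in (0:ℝ)..(2 * π), g (cos x) :=
  (cos_periodic.comp g).intervalIntegral_comp_sub φ

open Complex in
theorem integral_comp_cos_sub_mul_cexp_neg {g : ℝ → ℝ} (hg : Continuous fun x => g (Real.cos x))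
    (φ : ℝ) :
    ∫ x in (0:ℝ)..(2 * π), (g (Real.cos (x - φ)) : ℂ) * cexp (-I * x) =
      cexp (-I * φ) * ↑(∫ x in (0:ℝ)..(2 * π), g (Real.cos x) * Real.cos x) := by
  have hshift (x : ℝ) : (g (Real.cos (x - φ)) : ℂ) * cexp (-I * x) =
      (fun y => (g (Real.cos y) : ℂ) * cexp (-I * y)) (x - φ) * cexp (-I * φ) := by
    simp only [mul_assoc, ← Complex.exp_add]
    push_cast
    ring_nf
  have hper : Function.Periodic (fun y => (g (Real.cos y) : ℂ) * cexp (-I * y)) (2 * π) := by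
    intro y
    simp only [Real.cos_add_two_pi]
    push_cast
    rw [mul_add, Complex.exp_add, show -I * (2 * π) = -(2 * π * I) by ring, Complex.exp_neg,
      Complex.exp_two_pi_mul_I, inv_one, mul_one]
  have hcexp (y : ℝ) : (g (Real.cos y) : ℂ) * cexp (-I * y) =
      ((g (Real.cos y) * Real.cos y : ℝ) : ℂ) - I * ((g (Real.cos y) * Real.sin y : ℝ) : ℂ) := by
    rw [show -I * y = ((-y : ℝ) : ℂ) * I by push_cast; ring, Complex.exp_mul_I]
    push_cast
    rw [Complex.cos_neg, Complex.sin_neg]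
    ring
  have hc : Continuous fun y => ((g (Real.cos y) * Real.cos y : ℝ) : ℂ) :=
    continuous_ofReal.comp (hg.mul Real.continuous_cos)
  have hs : Continuous fun y => ((g (Real.cos y) * Real.sin y : ℝ) : ℂ) :=
    continuous_ofReal.comp (hg.mul Real.continuous_sin)
  rw [integral_congr (fun x _ => hshift x), intervalIntegral.integral_mul_const,
    hper.intervalIntegral_comp_sub, integral_congr (fun y _ => hcexp y),
    integral_sub (hc.intervalIntegrable _ _) ((hs.intervalIntegrable _ _).const_mul I),
    intervalIntegral.integral_const_mul, intervalIntegral.integral_ofReal,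
    intervalIntegral.integral_ofReal,
    integral_comp_cos_mul_sin]
  simp [mul_comm]

end PeriodIntegrals

section HusimiAzimuthal

noncomputable def husimiMean (r θ θ₁ : ℝ) : ℝ := 1 + r * cos θ * cos θ₁

noncomputable def husimiAmp (r θ θ₁ : ℝ) : ℝ := r * sin θ * sin θ₁

noncomputable def husimiRoot (r θ θ₁ : ℝ) : ℝ := √(husimiMean r θ θ₁ ^ 2 - husimiAmp r θ θ₁ ^ 2)

variable {r : ℝ} (θ : ℝ)

lemma abs_cos_mul_cos_add_abs_sin_mul_sin_le_one (a b : ℝ) :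
    |cos a * cos b| + |sin a * sin b| ≤ 1 := by
  rw [abs_mul, abs_mul]
  have ha := sin_sq_add_cos_sq a
  have hb := sin_sq_add_cos_sq b
  rw [← sq_abs (sin a), ← sq_abs (cos a)] at ha
  rw [← sq_abs (sin b), ← sq_abs (cos b)] at hb
  nlinarith [sq_nonneg (|cos a| * |sin b| - |sin a| * |cos b|), abs_nonneg (cos a),
    abs_nonneg (cos b), abs_nonneg (sin a), abs_nonneg (sin b)]

lemma abs_husimiAmp_lt (hr : 0 ≤ r) (hr1 : r < 1) (θ₁ : ℝ) :
    |husimiAmp r θ θ₁| < husimiMean r θ θ₁ := by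
  have h := abs_cos_mul_cos_add_abs_sin_mul_sin_le_one θ θ₁
  have hcc := neg_abs_le (cos θ * cos θ₁)
  rw [husimiAmp, husimiMean, mul_assoc, abs_mul, abs_of_nonneg hr, mul_assoc]
  nlinarith

lemma husimiRoot_pos (hr : 0 ≤ r) (hr1 : r < 1) (θ₁ : ℝ) : 0 < husimiRoot r θ θ₁ := by
  have h := abs_husimiAmp_lt θ hr hr1 θ₁
  exact Real.sqrt_pos.mpr (by nlinarith [abs_nonneg (husimiAmp r θ θ₁), sq_abs (husimiAmp r θ θ₁)])

lemma husimiRoot_eq (θ₁ : ℝ) :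
    husimiRoot r θ θ₁ = √((r * cos θ₁ + cos θ) ^ 2 + (1 - r ^ 2) * sin θ ^ 2) := by
  rw [husimiRoot, husimiMean, husimiAmp]
  congr 1
  linear_combination (r ^ 2 * cos θ₁ ^ 2 - 1) * sin_sq_add_cos_sq θ -
    r ^ 2 * sin θ ^ 2 * sin_sq_add_cos_sq θ₁

lemma husimiRoot_zero (hr : 0 ≤ r) (hr1 : r ≤ 1) : husimiRoot r θ 0 = 1 + r * cos θ := by
  rw [husimiRoot_eq, cos_zero, mul_one]
  rw [show (r + cos θ) ^ 2 + (1 - r ^ 2) * sin θ ^ 2 = (1 + r * cos θ) ^ 2 by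
    linear_combination (1 - r ^ 2) * sin_sq_add_cos_sq θ]
  exact Real.sqrt_sq (by nlinarith [neg_one_le_cos θ])

lemma husimiRoot_pi (hr : 0 ≤ r) (hr1 : r ≤ 1) : husimiRoot r θ π = 1 - r * cos θ := by
  rw [husimiRoot_eq, cos_pi]
  rw [show (r * -1 + cos θ) ^ 2 + (1 - r ^ 2) * sin θ ^ 2 = (1 - r * cos θ) ^ 2 by
    linear_combination (1 - r ^ 2) * sin_sq_add_cos_sq θ]
  exact Real.sqrt_sq (by nlinarith [cos_le_one θ])

lemma husimiRoot_pi_sub (θ₁ : ℝ) : husimiRoot r θ (π - θ₁) = husimiRoot r (π - θ) θ₁ := by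
  rw [husimiRoot_eq, husimiRoot_eq, cos_pi_sub, cos_pi_sub, sin_pi_sub]
  ring_nf

lemma continuous_husimiRoot : Continuous (husimiRoot r θ) := by
  unfold husimiRoot husimiMean husimiAmp
  fun_prop

lemma hasDerivAt_husimiRoot (hr : 0 ≤ r) (hr1 : r < 1) (x : ℝ) :
    HasDerivAt (husimiRoot r θ) (-(r * sin x * (r * cos x + cos θ)) / husimiRoot r θ x) x := by
  have hS := husimiRoot_pos θ hr hr1 x
  rw [husimiRoot_eq] at hS ⊢
  have h := ((((hasDerivAt_cos x).const_mul r).add_const (cos θ)).pow 2).add_const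
    ((1 - r ^ 2) * sin θ ^ 2) |>.sqrt (Real.sqrt_pos.mp hS).ne'
  rw [funext (husimiRoot_eq θ)]
  refine h.congr_deriv ?_
  simp only [Pi.pow_apply]
  field_simp
  ring

theorem deriv_log_husimiQ (hr : 0 < r) (hr1 : r < 1) (φ θ₁ φ₁ : ℝ) :
    deriv (fun r' => log (husimiQ r' θ φ θ₁ φ₁)) r =
      (1 - (husimiMean r θ θ₁ + husimiAmp r θ θ₁ * cos (φ₁ - φ))⁻¹) / r := by
  set c := cos θ₁ * cos θ + cos (φ₁ - φ) * sin θ₁ * sin θ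
  have hfun : (fun r' => log (husimiQ r' θ φ θ₁ φ₁)) = fun r' => log ((1 + r' * c) / 2) :=
    funext fun r' => congrArg log (by rw [husimiQ]; ring)
  have hmean : husimiMean r θ θ₁ + husimiAmp r θ θ₁ * cos (φ₁ - φ) = 1 + r * c := by
    rw [husimiMean, husimiAmp]; ring
  have hpos : 0 < 1 + r * c :=
    hmean ▸ add_mul_cos_pos (abs_husimiAmp_lt θ hr.le hr1 θ₁) (φ₁ - φ)
  have h := ((((hasDerivAt_id' r).mul_const c).const_add 1).div_const 2).log (by positivity)
  rw [hfun, h.deriv, hmean]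
  have : 1 + c * r ≠ 0 := by linarith
  field_simp
  ring

end HusimiAzimuthal

section PolarIntegrals

variable {r : ℝ} (θ : ℝ)

lemma intervalIntegrable_sin_div_husimiRoot (hr : 0 ≤ r) (hr1 : r < 1) (a b : ℝ) :
    IntervalIntegrable (fun x => sin x / husimiRoot r θ x) volume a b :=
  (continuous_sin.div (continuous_husimiRoot θ)
    fun x => (husimiRoot_pos θ hr hr1 x).ne').intervalIntegrable a b

lemma intervalIntegrable_sin_mul_cos_div_husimiRoot (hr : 0 ≤ r) (hr1 : r < 1) (a b : ℝ) :
    IntervalIntegrable (fun x => sin x * cos x / husimiRoot r θ x) volume a b :=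
  ((continuous_sin.mul continuous_cos).div (continuous_husimiRoot θ)
    fun x => (husimiRoot_pos θ hr hr1 x).ne').intervalIntegrable a b

lemma husimiRoot_add_pos (hr : 0 ≤ r) (hr1 : r < 1) (hθ : cos θ ≠ -1) (x : ℝ) :
    0 < husimiRoot r θ x + (r * cos x + cos θ) := by
  have hS := husimiRoot_pos θ hr hr1 x
  have hS2 : husimiRoot r θ x ^ 2 = (r * cos x + cos θ) ^ 2 + (1 - r ^ 2) * sin θ ^ 2 := by
    have : 0 ≤ 1 - r ^ 2 := by nlinarith
    rw [husimiRoot_eq]; exact Real.sq_sqrt (by positivity)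
  rcases le_or_gt 0 (r * cos x + cos θ) with hu | hu
  · linarith
  · have hcos : -1 < cos θ := lt_of_le_of_ne (neg_one_le_cos θ) (Ne.symm hθ)
    have hcos1 : cos θ < 1 := by nlinarith [neg_one_le_cos x, cos_le_one x]
    have hsin : 0 < sin θ ^ 2 := by nlinarith [sin_sq_add_cos_sq θ]
    have : 0 < (1 - r ^ 2) * sin θ ^ 2 := mul_pos (by nlinarith) hsin
    have : 0 < husimiRoot r θ x - (r * cos x + cos θ) := by linarith
    nlinarith

lemma hasDerivAt_log_husimiRoot_add (hr : 0 ≤ r) (hr1 : r < 1) (hθ : cos θ ≠ -1) (x : ℝ) :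
    HasDerivAt (fun y => log (husimiRoot r θ y + (r * cos y + cos θ)))
      (-(r * sin x) / husimiRoot r θ x) x := by
  have hS := (husimiRoot_pos θ hr hr1 x).ne'
  have hD := (husimiRoot_add_pos θ hr hr1 hθ x).ne'
  refine (((hasDerivAt_husimiRoot θ hr hr1 x).add
    (((hasDerivAt_cos x).const_mul r).add_const (cos θ))).log hD).congr_deriv ?_
  simp only [Pi.add_apply]
  field_simp
  ring

lemma integral_sin_div_husimiRoot_of_cos_ne (hr : 0 < r) (hr1 : r < 1) (hθ : cos θ ≠ -1) :
    ∫ x in (0:ℝ)..π, sin x / husimiRoot r θ x = -log ((1 - r) / (1 + r)) / r := by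
  have hF (x : ℝ) : HasDerivAt (fun y => -log (husimiRoot r θ y + (r * cos y + cos θ)) / r)
      (sin x / husimiRoot r θ x) x := by
    refine ((hasDerivAt_log_husimiRoot_add θ hr.le hr1 hθ x).neg.div_const r).congr_deriv ?_
    field_simp
  have hc : 0 < 1 + cos θ := by linarith [lt_of_le_of_ne (neg_one_le_cos θ) (Ne.symm hθ)]
  rw [integral_eq_sub_of_hasDerivAt (fun x _ => hF x)
    (intervalIntegrable_sin_div_husimiRoot θ hr.le hr1 _ _),
    husimiRoot_pi θ hr.le hr1.le, husimiRoot_zero θ hr.le hr1.le, cos_pi, cos_zero,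
    show 1 - r * cos θ + (r * -1 + cos θ) = (1 - r) * (1 + cos θ) by ring,
    show 1 + r * cos θ + (r * 1 + cos θ) = (1 + r) * (1 + cos θ) by ring,
    log_div (by linarith) (by positivity), log_mul (by linarith) hc.ne',
    log_mul (by positivity) hc.ne']
  ring

-- The substitution `x ↦ π - x` exchanges `θ` and `π - θ`, which removes the case `cos θ = -1`.
theorem integral_sin_div_husimiRoot (hr : 0 < r) (hr1 : r < 1) :
    ∫ x in (0:ℝ)..π, sin x / husimiRoot r θ x = -log ((1 - r) / (1 + r)) / r := by
  by_cases hθ : cos θ = -1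
  · have h := integral_comp_sub_left (fun x => sin x / husimiRoot r θ x) (a := 0) (b := π) π
    simp only [sin_pi_sub, husimiRoot_pi_sub, sub_self, sub_zero] at h
    rw [← h]
    exact integral_sin_div_husimiRoot_of_cos_ne (π - θ) hr hr1 (by rw [cos_pi_sub, hθ]; norm_num)
  · exact integral_sin_div_husimiRoot_of_cos_ne θ hr hr1 hθ

theorem integral_sin_mul_cos_div_husimiRoot (hr : 0 < r) (hr1 : r < 1) :
    ∫ x in (0:ℝ)..π, sin x * cos x / husimiRoot r θ x =
      cos θ * (2 * r + log ((1 - r) / (1 + r))) / r ^ 2 := by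
  have hF (x : ℝ) : HasDerivAt (fun y => -husimiRoot r θ y / r ^ 2)
      (sin x * cos x / husimiRoot r θ x + cos θ / r * (sin x / husimiRoot r θ x)) x := by
    have hS := (husimiRoot_pos θ hr.le hr1 x).ne'
    refine ((hasDerivAt_husimiRoot θ hr.le hr1 x).neg.div_const _).congr_deriv ?_
    field_simp
  have i₀ := intervalIntegrable_sin_div_husimiRoot θ hr.le hr1 0 π
  have i₁ := intervalIntegrable_sin_mul_cos_div_husimiRoot θ hr.le hr1 0 π
  have h := integral_eq_sub_of_hasDerivAt (fun x _ => hF x) (i₁.add (i₀.const_mul _))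
  rw [integral_add i₁ (i₀.const_mul _),
    intervalIntegral.integral_const_mul, integral_sin_div_husimiRoot θ hr hr1,
    husimiRoot_pi θ hr.le hr1.le, husimiRoot_zero θ hr.le hr1.le] at h
  rw [eq_div_iff (by positivity)]
  field_simp at h
  linear_combination h

theorem integral_one_sub_inv_husimiRoot_mul (hr : 0 < r) (hr1 : r < 1) (e : ℝ) :
    ∫ x in (0:ℝ)..π, (1 - (husimiRoot r θ x)⁻¹) * ((1 + e * cos x) * sin x) =
      (2 * r + log ((1 - r) / (1 + r))) * (r - e * cos θ) / r ^ 2 := by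
  have h (x : ℝ) : (1 - (husimiRoot r θ x)⁻¹) * ((1 + e * cos x) * sin x) =
      sin x + e * (sin x * cos x) -
        (sin x / husimiRoot r θ x + e * (sin x * cos x / husimiRoot r θ x)) := by
    have := (husimiRoot_pos θ hr.le hr1 x).ne'
    field_simp
  have i₀ := intervalIntegrable_sin_div_husimiRoot θ hr.le hr1 0 π
  have i₁ := intervalIntegrable_sin_mul_cos_div_husimiRoot θ hr.le hr1 0 π
  have i₂ : IntervalIntegrable (fun x => sin x * cos x) volume 0 π :=
    (continuous_sin.mul continuous_cos).intervalIntegrable _ _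
  rw [integral_congr (fun x _ => h x),
    integral_sub (intervalIntegrable_sin.add (i₂.const_mul e)) (i₀.add (i₁.const_mul e)),
    integral_add intervalIntegrable_sin (i₂.const_mul e), integral_add i₀ (i₁.const_mul e),
    intervalIntegral.integral_const_mul, intervalIntegral.integral_const_mul, integral_sin,
    integral_sin_mul_cos₁, integral_sin_div_husimiRoot θ hr hr1,
    integral_sin_mul_cos_div_husimiRoot θ hr hr1]
  simp only [cos_zero, cos_pi, sin_pi, sin_zero]
  field_simp
  ring

theorem integral_sin_sq_mul_integral_one_sub_inv_mul_cos (hr : 0 < r) (hr1 : r < 1) :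
    ∫ x in (0:ℝ)..π, sin x ^ 2 * ∫ y in (0:ℝ)..(2 * π),
        (1 - (husimiMean r θ x + husimiAmp r θ x * cos y)⁻¹) * cos y =
      -(2 * π) * sin θ * (2 * r + log ((1 - r) / (1 + r))) / r ^ 2 := by
  by_cases hθ : sin θ = 0
  · simp [husimiAmp, hθ, intervalIntegral.integral_const_mul]
  have h (x : ℝ) : sin x ^ 2 * ∫ y in (0:ℝ)..(2 * π),
        (1 - (husimiMean r θ x + husimiAmp r θ x * cos y)⁻¹) * cos y =
      2 * π / (r * sin θ) *
        (sin x / husimiRoot r θ x + r * cos θ * (sin x * cos x / husimiRoot r θ x) - sin x) := by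
    have hm := mul_integral_one_sub_inv_add_mul_cos_mul_cos (abs_husimiAmp_lt θ hr.le hr1 x)
    have := (husimiRoot_pos θ hr.le hr1 x).ne'
    rw [← husimiRoot] at hm
    set I := ∫ y in (0:ℝ)..(2 * π), (1 - (husimiMean r θ x + husimiAmp r θ x * cos y)⁻¹) * cos y
    rw [husimiAmp, husimiMean] at hm
    field_simp at hm ⊢
    linear_combination sin x * hm
  have i₀ := intervalIntegrable_sin_div_husimiRoot θ hr.le hr1 0 π
  have i₁ := intervalIntegrable_sin_mul_cos_div_husimiRoot θ hr.le hr1 0 π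
  rw [integral_congr (fun x _ => h x), intervalIntegral.integral_const_mul,
    integral_sub (i₀.add (i₁.const_mul _)) intervalIntegrable_sin, integral_add i₀ (i₁.const_mul _),
    intervalIntegral.integral_const_mul, integral_sin_div_husimiRoot θ hr hr1,
    integral_sin_mul_cos_div_husimiRoot θ hr hr1, integral_sin, cos_pi, cos_zero]
  field_simp
  linear_combination (2 * r + log ((1 - r) / (1 + r))) * sin_sq_add_cos_sq θ

end PolarIntegrals

section L1Entries

noncomputable def L1Integral (r θ φ : ℝ) (k : ℝ → ℝ → ℂ) : ℂ :=
  ∫ θ₁ in (0:ℝ)..π, ∫ φ₁ in (0:ℝ)..(2 * π),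
    ((deriv (fun r' => log (husimiQ r' θ φ θ₁ φ₁)) r : ℝ) : ℂ) * k θ₁ φ₁ *
      ((sin θ₁ / (2 * π) : ℝ) : ℂ)

variable {r : ℝ} (θ φ : ℝ)

theorem L1Integral_conj (k : ℝ → ℝ → ℂ) :
    L1Integral r θ φ (fun θ₁ φ₁ => conj (k θ₁ φ₁)) = conj (L1Integral r θ φ k) := by
  simp only [L1Integral, ← intervalIntegral_conj, map_mul, Complex.conj_ofReal]

theorem L1Integral_diag (hr : 0 < r) (hr1 : r < 1) (e : ℝ) :
    L1Integral r θ φ (fun θ₁ _ => ((1 + e * cos θ₁) / 2 : ℝ)) =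
      ((1 / (2 * r ^ 3) * (2 * r + log ((1 - r) / (1 + r))) * (r - e * cos θ) : ℝ) : ℂ) := by
  have hinner (θ₁ : ℝ) : ∫ φ₁ in (0:ℝ)..(2 * π),
      ((deriv (fun r' => log (husimiQ r' θ φ θ₁ φ₁)) r : ℝ) : ℂ) *
        (((1 + e * cos θ₁) / 2 : ℝ) : ℂ) * ((sin θ₁ / (2 * π) : ℝ) : ℂ) =
      (((1 - (husimiRoot r θ θ₁)⁻¹) * ((1 + e * cos θ₁) * sin θ₁) / (2 * r) : ℝ) : ℂ) := by
    simp_rw [deriv_log_husimiQ θ hr hr1 φ, ← Complex.ofReal_mul, intervalIntegral.integral_ofReal,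
      intervalIntegral.integral_mul_const, intervalIntegral.integral_div]
    rw [integral_comp_cos_sub (fun c => 1 - (husimiMean r θ θ₁ + husimiAmp r θ θ₁ * c)⁻¹),
      integral_one_sub_inv_add_mul_cos (abs_husimiAmp_lt θ hr.le hr1 θ₁), ← husimiRoot]
    congr 1
    field_simp
  simp_rw [L1Integral, hinner, intervalIntegral.integral_ofReal, intervalIntegral.integral_div,
    integral_one_sub_inv_husimiRoot_mul θ hr hr1]
  congr 1
  field_simp

theorem L1Integral_offDiag (hr : 0 < r) (hr1 : r < 1) :
    L1Integral r θ φ (fun θ₁ φ₁ => 1 / 2 * (3 * Complex.exp (-Complex.I * φ₁) * (sin θ₁ : ℂ))) =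
      ((1 / (2 * r ^ 3) * (2 * r + log ((1 - r) / (1 + r))) : ℝ) : ℂ) *
        (-3 * Complex.exp (-Complex.I * φ) * (sin θ : ℂ)) := by
  have hinner (θ₁ : ℝ) : ∫ φ₁ in (0:ℝ)..(2 * π),
      ((deriv (fun r' => log (husimiQ r' θ φ θ₁ φ₁)) r : ℝ) : ℂ) *
        (1 / 2 * (3 * Complex.exp (-Complex.I * φ₁) * (sin θ₁ : ℂ))) *
          ((sin θ₁ / (2 * π) : ℝ) : ℂ) =
      Complex.exp (-Complex.I * φ) * ((3 / (4 * π * r) * (sin θ₁ ^ 2 *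
        ∫ y in (0:ℝ)..(2 * π), (1 - (husimiMean r θ θ₁ + husimiAmp r θ θ₁ * cos y)⁻¹) * cos y)
          : ℝ) : ℂ) := by
    have hg : Continuous fun y => 1 - (husimiMean r θ θ₁ + husimiAmp r θ θ₁ * cos y)⁻¹ :=
      continuous_const.sub (continuous_inv_add_mul_cos (abs_husimiAmp_lt θ hr.le hr1 θ₁))
    simp_rw [deriv_log_husimiQ θ hr hr1 φ]
    rw [integral_congr (g := fun φ₁ => ((3 * sin θ₁ ^ 2 / (4 * π * r) : ℝ) : ℂ) *
      (((1 - (husimiMean r θ θ₁ + husimiAmp r θ θ₁ * cos (φ₁ - φ))⁻¹ : ℝ) : ℂ) *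
        Complex.exp (-Complex.I * φ₁))) (fun φ₁ _ => by push_cast; ring),
      intervalIntegral.integral_const_mul,
      integral_comp_cos_sub_mul_cexp_neg
        (g := fun c => 1 - (husimiMean r θ θ₁ + husimiAmp r θ θ₁ * c)⁻¹) hg]
    push_cast
    ring
  simp_rw [L1Integral, hinner, intervalIntegral.integral_const_mul,
    intervalIntegral.integral_ofReal, intervalIntegral.integral_const_mul,
    integral_sin_sq_mul_integral_one_sub_inv_mul_cos θ hr hr1]
  push_cast
  field_simp
  ring

end L1Entries

theorem L1_integral_formula (r θ φ : ℝ) (hr : 0 < r) (hr1 : r < 1) (i j : Fin 2) :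
    (∫ θ₁ in (0:ℝ)..π, ∫ φ₁ in (0:ℝ)..(2 * π),
        ((deriv (fun r' => Real.log (husimiQ r' θ φ θ₁ φ₁)) r : ℝ) : ℂ) *
          swKernelOne θ₁ φ₁ i j * ((Real.sin θ₁ / (2 * π) : ℝ) : ℂ)) =
      L1 r θ φ i j := by
  change L1Integral r θ φ (fun θ₁ φ₁ => swKernelOne θ₁ φ₁ i j) = L1 r θ φ i j
  fin_cases i <;> fin_cases j <;>
    simp only [swKernelOne, L1, Matrix.smul_apply, Matrix.of_apply, Matrix.cons_val',
      Matrix.cons_val_zero, Matrix.cons_val_one, Matrix.empty_val', Matrix.cons_val_fin_one,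
      smul_eq_mul, Fin.zero_eta, Fin.mk_one]
  · convert L1Integral_diag θ φ hr hr1 3 using 1
    · congr 1; funext θ₁ φ₁; push_cast; ring
    · push_cast; ring
  · exact L1Integral_offDiag θ φ hr hr1
  · have h := congrArg conj (L1Integral_offDiag θ φ hr hr1)
    rw [← L1Integral_conj] at h
    simpa only [map_mul, map_div₀, map_one, map_ofNat, map_neg, Complex.conj_ofReal,
      ← Complex.exp_conj, Complex.conj_I, neg_neg] using h
  · convert L1Integral_diag θ φ hr hr1 (-3) using 1
    · congr 1; funext θ₁ φ₁; push_cast; ring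
    · push_cast; ring
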